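/- Let W be a finite nonempty set and σ : W → W × W such that the associated directed graph (with edges q → σ(q).1 and q → σ(q).2) is strongly connected. Then there exists a nondecreasing sequence (n_k)_{k∈ℕ} of natural numbers with n_k → ∞ such that for every q ∈ W, the set of coin sequences b ∈ {0,1}^ℕ with the property that for every k ∈ ℕ every state of W appears at least n_k times among the first k+1 states X_0, …, X_k of the trajectory from q driven by b, has μ-measure at least 1/2. -/

import Mathlib

/-!
By strong connectivity, for every level `m` there are a block length `ℓ` and, from every state,
a word of length `ℓ` along which every state is entered at least `m` times. If the trajectory
misses some state `m` times within its first `Nℓ` steps, then each of the `N` blocks of `ℓ` coins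
differs from the covering word of the state where the block starts; at most `(2^ℓ - 1)^N` coin
prefixes do so, so this has probability at most `(1 - 2^{-ℓ})^N`. Pick a time `T m` at which the
failure probability is at most `2^{-(m+2)}` and let `n_k` be the largest `m ≤ k` with
`T m ≤ k`: a union bound over `m` leaves probability at least `1/2`.
-/

open MeasureTheory

/-- The cylinder of a finite binary word `w`. -/
def cylinder (w : List Bool) : Set (ℕ → Bool) :=
  {b | ∀ i : Fin w.length, b i = w.get i}

/-- `μ` is the uniform probability measure on `{0,1}^ℕ`: the infinite product of
fair-coin Bernoulli(1/2) measures. -/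
def IsUniformBernoulli (μ : Measure (ℕ → Bool)) : Prop :=
  IsProbabilityMeasure μ ∧ ∀ w : List Bool, μ (cylinder w) = (2 : ENNReal)⁻¹ ^ w.length

/-- The trajectory from `q` driven by the coin sequence `b`: at each step move to
the first or second component of `σ` according to whether the coin is `0` (false)
or `1` (true). -/
def traj {W : Type} (σ : W → W × W) (q : W) (b : ℕ → Bool) : ℕ → W
  | 0 => q
  | i + 1 => if b i then (σ (traj σ q b i)).2 else (σ (traj σ q b i)).1

theorem MeasureTheory.inv_two_le_measure_of_compl_subset_iUnion {α : Type*} [MeasurableSpace α]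
    {μ : Measure α} [IsProbabilityMeasure μ] {E : Set α} {F : ℕ → Set α}
    (hF : ∀ m, μ (F m) ≤ (2 : ENNReal)⁻¹ ^ (m + 2)) (hE : Eᶜ ⊆ ⋃ m, F m) :
    (2 : ENNReal)⁻¹ ≤ μ E := by
  have hEc : μ Eᶜ ≤ 2⁻¹ :=
    calc μ Eᶜ ≤ ∑' m, μ (F m) := (measure_mono hE).trans (measure_iUnion_le F)
      _ ≤ ∑' m : ℕ, (2 : ENNReal)⁻¹ ^ (m + 2) := ENNReal.tsum_le_tsum hF
      _ = 2⁻¹ := by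
        simp only [pow_add, ENNReal.tsum_mul_right, ENNReal.tsum_geometric_two]
        rw [pow_two, ← mul_assoc, ENNReal.mul_inv_cancel two_ne_zero ENNReal.ofNat_ne_top,
          one_mul]
  refine ENNReal.le_of_add_le_add_right (a := 2⁻¹) (by simp) ?_
  calc 2⁻¹ + 2⁻¹ = μ (E ∪ Eᶜ) := by rw [ENNReal.inv_two_add_inv_two, Set.union_compl_self,
        measure_univ]
    _ ≤ μ E + μ Eᶜ := measure_union_le E Eᶜ
    _ ≤ μ E + 2⁻¹ := add_le_add_right hEc _

namespace CoinWalk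

variable {W : Type} (σ : W → W × W)

def step (p : W) (c : Bool) : W := if c then (σ p).2 else (σ p).1

def run (p : W) (u : List Bool) : W := u.foldl (step σ) p

def StronglyConnected : Prop :=
  ∀ q q' : W, Relation.ReflTransGen (fun x y => y = (σ x).1 ∨ y = (σ x).2) q q'

/-- The states entered while reading `u` from `p`, excluding `p` itself. -/
def visited : W → List Bool → List W
  | _, [] => []
  | p, c :: u => step σ p c :: visited (step σ p c) u

variable {σ}

theorem run_append (p : W) (u v : List Bool) : run σ p (u ++ v) = run σ (run σ p u) v :=
  List.foldl_append

theorem visited_append (p : W) (u v : List Bool) :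
    visited σ p (u ++ v) = visited σ p u ++ visited σ (run σ p u) v := by
  induction u generalizing p with
  | nil => rfl
  | cons c u ih => simp [visited, run, ih]

theorem run_mem_cons_visited (p : W) (u : List Bool) : run σ p u ∈ p :: visited σ p u := by
  induction u generalizing p with
  | nil => simp [run]
  | cons c u ih => exact List.mem_cons_of_mem _ (ih (step σ p c))

theorem exists_run_eq (hsc : StronglyConnected σ) (p q : W) : ∃ u, run σ p u = q := by
  induction hsc p q with
  | refl => exact ⟨[], rfl⟩
  | tail _ hedge ih =>
    obtain ⟨u, rfl⟩ := ih
    rcases hedge with h | h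
    · exact ⟨u ++ [false], by simp [h, run, step]⟩
    · exact ⟨u ++ [true], by simp [h, run, step]⟩

section Covers

variable [DecidableEq W]

variable (σ) in
def Covers (m : ℕ) (p : W) (u : List Bool) : Prop :=
  ∀ w, m ≤ (visited σ p u).count w

theorem Covers.append_right {m : ℕ} {p : W} {u : List Bool} (h : Covers σ m p u)
    (v : List Bool) : Covers σ m p (u ++ v) := fun w => by
  rw [visited_append, List.count_append]
  exact (h w).trans (Nat.le_add_right _ _)

theorem Covers.append_left {m : ℕ} {p : W} {u v : List Bool} (h : Covers σ m (run σ p u) v) :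
    Covers σ m p (u ++ v) := fun w => by
  rw [visited_append, List.count_append]
  exact (h w).trans (Nat.le_add_left _ _)

theorem Covers.append {m n : ℕ} {p : W} {u v : List Bool} (hu : Covers σ m p u)
    (hv : Covers σ n (run σ p u) v) : Covers σ (m + n) p (u ++ v) := fun w => by
  rw [visited_append, List.count_append]
  exact Nat.add_le_add (hu w) (hv w)

variable [Fintype W]

theorem exists_covers_one (hsc : StronglyConnected σ) (p : W) :
    ∃ u, Covers σ 1 p u := by
  suffices ∀ (s : Finset W) (p : W), ∃ u, ∀ w ∈ s, w ∈ visited σ p u by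
    obtain ⟨u, hu⟩ := this Finset.univ p
    exact ⟨u, fun w => List.one_le_count_iff.2 (hu w (Finset.mem_univ w))⟩
  intro s
  induction s using Finset.induction_on with
  | empty => exact fun _ => ⟨[], by simp⟩
  | insert w s _ ih =>
    intro p
    -- one forced step first, so that `w` is entered rather than merely started from
    obtain ⟨u, hu⟩ := exists_run_eq hsc (step σ p false) w
    have hw : w ∈ visited σ p (false :: u) := hu ▸ run_mem_cons_visited _ _
    obtain ⟨v, hv⟩ := ih (run σ p (false :: u))
    refine ⟨false :: u ++ v, fun x hx => ?_⟩
    rw [visited_append, List.mem_append]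
    rcases Finset.mem_insert.1 hx with rfl | hx
    · exact Or.inl hw
    · exact Or.inr (hv x hx)

theorem exists_covers (hsc : StronglyConnected σ) (m : ℕ) (p : W) :
    ∃ u, Covers σ m p u := by
  induction m generalizing p with
  | zero => exact ⟨[], fun _ => Nat.zero_le _⟩
  | succ m ih =>
    obtain ⟨u, hu⟩ := ih p
    obtain ⟨v, hv⟩ := exists_covers_one hsc (run σ p u)
    exact ⟨u ++ v, hu.append hv⟩

theorem exists_covers_of_length_eq (hsc : StronglyConnected σ) (m : ℕ) :
    ∃ ℓ, ∀ p : W, ∃ u, u.length = ℓ ∧ Covers σ m p u := by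
  choose u hu using exists_covers hsc m
  let ℓ := Finset.univ.sup fun p => (u p).length
  refine ⟨ℓ, fun p =>
    ⟨u p ++ List.replicate (ℓ - (u p).length) false, ?_, (hu p).append_right _⟩⟩
  have : (u p).length ≤ ℓ := Finset.le_sup (f := fun p => (u p).length) (Finset.mem_univ p)
  simp only [List.length_append, List.length_replicate]
  omega

end Covers

def words (n : ℕ) : Finset (List Bool) :=
  Finset.univ.image (List.ofFn : (Fin n → Bool) → List Bool)

theorem card_words (n : ℕ) : (words n).card = 2 ^ n := by
  simp [words, Finset.card_image_of_injective _ List.ofFn_injective]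

theorem mem_words {n : ℕ} {u : List Bool} : u ∈ words n ↔ u.length = n := by
  refine ⟨fun h => ?_, fun h => ?_⟩
  · obtain ⟨f, -, rfl⟩ := Finset.mem_image.1 h
    exact List.length_ofFn
  · subst h
    exact Finset.mem_image.2 ⟨u.get, Finset.mem_univ _, List.ofFn_get u⟩

section BadBlocks

variable [Fintype W] [DecidableEq W]

instance (m : ℕ) (p : W) : DecidablePred (Covers σ m p) :=
  fun _ => Fintype.decidableForallFintype

variable (σ) in
def badBlocks (m ℓ : ℕ) : ℕ → W → Finset (List Bool)
  | 0, _ => {[]}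
  | N + 1, p => {u ∈ words ℓ | ¬ Covers σ m p u}.biUnion
      fun u => (badBlocks m ℓ N (run σ p u)).image (u ++ ·)

theorem length_of_mem_badBlocks {m ℓ N : ℕ} {p : W} {v : List Bool}
    (hv : v ∈ badBlocks σ m ℓ N p) : v.length = N * ℓ := by
  induction N generalizing p v with
  | zero => simp_all [badBlocks]
  | succ N ih =>
    simp only [badBlocks, Finset.mem_biUnion, Finset.mem_filter, mem_words,
      Finset.mem_image] at hv
    obtain ⟨u, ⟨hu, -⟩, v, hv, rfl⟩ := hv
    rw [List.length_append, hu, ih hv]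
    ring

theorem card_badBlocks_le {m ℓ : ℕ} (hℓ : ∀ p : W, ∃ u, u.length = ℓ ∧ Covers σ m p u)
    (N : ℕ) (p : W) : (badBlocks σ m ℓ N p).card ≤ (2 ^ ℓ - 1) ^ N := by
  induction N generalizing p with
  | zero => simp [badBlocks]
  | succ N ih =>
    have hbad : ∀ p, {u ∈ words ℓ | ¬ Covers σ m p u}.card ≤ 2 ^ ℓ - 1 := fun p => by
      obtain ⟨u, hlen, hu⟩ := hℓ p
      have hsub : {u ∈ words ℓ | ¬ Covers σ m p u} ⊂ words ℓ :=
        Finset.filter_ssubset.2 ⟨u, mem_words.2 hlen, not_not.2 hu⟩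
      have := Finset.card_lt_card hsub
      rw [card_words] at this
      omega
    calc (badBlocks σ m ℓ (N + 1) p).card
        ≤ ∑ u ∈ {u ∈ words ℓ | ¬ Covers σ m p u}, (badBlocks σ m ℓ N (run σ p u)).card :=
          Finset.card_biUnion_le.trans (Finset.sum_le_sum fun _ _ => Finset.card_image_le)
      _ ≤ ∑ _u ∈ {u ∈ words ℓ | ¬ Covers σ m p u}, (2 ^ ℓ - 1) ^ N :=
          Finset.sum_le_sum fun u _ => ih _
      _ ≤ (2 ^ ℓ - 1) ^ (N + 1) := by
          rw [Finset.sum_const, smul_eq_mul, pow_succ']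
          exact Nat.mul_le_mul_right _ (hbad p)

theorem mem_badBlocks_of_not_covers {m ℓ N : ℕ} {p : W} {v : List Bool}
    (hlen : v.length = N * ℓ) (hv : ¬ Covers σ m p v) : v ∈ badBlocks σ m ℓ N p := by
  induction N generalizing p v with
  | zero => simp_all [badBlocks]
  | succ N ih =>
    rw [← List.take_append_drop ℓ v] at hv ⊢
    simp only [badBlocks, Finset.mem_biUnion, Finset.mem_filter, mem_words, Finset.mem_image]
    refine ⟨v.take ℓ, ⟨?_, fun h => hv (h.append_right _)⟩, v.drop ℓ, ?_, rfl⟩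
    · simp only [List.length_take, hlen]
      exact min_eq_left (Nat.le_mul_of_pos_left _ N.succ_pos)
    · refine ih ?_ fun h => hv h.append_left
      simp only [List.length_drop, hlen]
      rw [Nat.succ_mul, Nat.add_sub_cancel]

end BadBlocks

theorem run_map_range_eq_traj (q : W) (b : ℕ → Bool) (n : ℕ) :
    run σ q ((List.range n).map b) = traj σ q b n := by
  induction n with
  | zero => rfl
  | succ n ih =>
    rw [List.range_succ, List.map_append, run_append, ih]
    rfl

theorem count_visited_map_range_le [DecidableEq W] (q : W) (b : ℕ → Bool) (k : ℕ) (w : W) :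
    (visited σ q ((List.range k).map b)).count w ≤
      ((Finset.range (k + 1)).filter fun i => traj σ q b i = w).card := by
  induction k with
  | zero => simp [visited]
  | succ k ih =>
    have hlast : visited σ (run σ q ((List.range k).map b)) [b k] = [traj σ q b (k + 1)] := by
      rw [run_map_range_eq_traj]
      rfl
    rw [List.range_succ, List.map_append, visited_append, List.map_singleton, hlast,
      List.count_append, Finset.card_filter, Finset.sum_range_succ, ← Finset.card_filter]
    gcongr
    simp [List.count_singleton]

theorem mem_cylinder_map_range (b : ℕ → Bool) (n : ℕ) : b ∈ cylinder ((List.range n).map b) :=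
  fun i => by simp

theorem measure_le_card_mul_of_map_range_mem {μ : Measure (ℕ → Bool)} (hμ : IsUniformBernoulli μ)
    {S : Finset (List Bool)} {n : ℕ} (hS : ∀ v ∈ S, v.length = n) {A : Set (ℕ → Bool)}
    (hA : ∀ b ∈ A, (List.range n).map b ∈ S) : μ A ≤ S.card * (2 : ENNReal)⁻¹ ^ n :=
  calc μ A ≤ μ (⋃ v ∈ S, cylinder v) :=
        measure_mono fun b hb => Set.mem_biUnion (hA b hb) (mem_cylinder_map_range b n)
    _ ≤ ∑ v ∈ S, μ (cylinder v) := measure_biUnion_finset_le _ _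
    _ = ∑ _v ∈ S, (2 : ENNReal)⁻¹ ^ n :=
        Finset.sum_congr rfl fun v hv => by rw [hμ.2, hS v hv]
    _ = S.card * (2 : ENNReal)⁻¹ ^ n := by rw [Finset.sum_const, nsmul_eq_mul]

theorem measure_not_covers_le [Fintype W] [DecidableEq W] {μ : Measure (ℕ → Bool)}
    (hμ : IsUniformBernoulli μ) {m ℓ : ℕ} (hℓ : ∀ p : W, ∃ u, u.length = ℓ ∧ Covers σ m p u)
    (N : ℕ) (q : W) :
    μ {b | ¬ Covers σ m q ((List.range (N * ℓ)).map b)} ≤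
      (((2 ^ ℓ - 1 : ℕ) : ENNReal) * (2 : ENNReal)⁻¹ ^ ℓ) ^ N :=
  calc _ ≤ (badBlocks σ m ℓ N q).card * (2 : ENNReal)⁻¹ ^ (N * ℓ) :=
        measure_le_card_mul_of_map_range_mem hμ (fun _ => length_of_mem_badBlocks)
          fun _ hb => mem_badBlocks_of_not_covers (by simp) hb
    _ ≤ ((2 ^ ℓ - 1) ^ N : ℕ) * (2 : ENNReal)⁻¹ ^ (N * ℓ) := by
        gcongr
        exact card_badBlocks_le hℓ N q
    _ = _ := by rw [mul_pow, Nat.cast_pow, ← pow_mul, mul_comm ℓ N]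

theorem natCast_two_pow_sub_one_mul_inv_two_pow_lt_one (ℓ : ℕ) :
    ((2 ^ ℓ - 1 : ℕ) : ENNReal) * (2 : ENNReal)⁻¹ ^ ℓ < 1 := by
  rw [← ENNReal.inv_pow, ← div_eq_mul_inv,
    ENNReal.div_lt_iff (Or.inl (by positivity)) (Or.inl (by simp)), one_mul]
  exact_mod_cast Nat.sub_lt (Nat.two_pow_pos ℓ) one_pos

theorem exists_time_measure_not_visits_le [Fintype W] [DecidableEq W] {μ : Measure (ℕ → Bool)}
    (hμ : IsUniformBernoulli μ) (hsc : StronglyConnected σ) (m : ℕ) {ε : ENNReal} (hε : ε ≠ 0) :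
    ∃ T, ∀ q : W,
      μ {b | ¬ ∀ w, m ≤ ((Finset.range (T + 1)).filter fun i => traj σ q b i = w).card} ≤ ε := by
  obtain ⟨ℓ, hℓ⟩ := exists_covers_of_length_eq hsc m
  obtain ⟨N, hN⟩ := ((ENNReal.tendsto_pow_atTop_nhds_zero_of_lt_one
    (natCast_two_pow_sub_one_mul_inv_two_pow_lt_one ℓ)).eventually_lt_const
    (pos_iff_ne_zero.2 hε)).exists
  refine ⟨N * ℓ, fun q =>
    le_trans (measure_mono ?_) ((measure_not_covers_le hμ hℓ N q).trans hN.le)⟩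
  intro b hb hcov
  exact hb fun w => (hcov w).trans (count_visited_map_range_le q b _ w)

end CoinWalk

theorem stmt_8_general {W : Type} [Fintype W] [DecidableEq W]
    (μ : Measure (ℕ → Bool)) (hμ : IsUniformBernoulli μ)
    (σ : W → W × W)
    (hsc : ∀ q q' : W,
      Relation.ReflTransGen (fun x y => y = (σ x).1 ∨ y = (σ x).2) q q') :
    ∃ nk : ℕ → ℕ, Monotone nk ∧ Filter.Tendsto nk Filter.atTop Filter.atTop ∧
      ∀ q : W, (2 : ENNReal)⁻¹ ≤
        μ {b | ∀ k : ℕ, ∀ w : W,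
          nk k ≤ ((Finset.range (k + 1)).filter fun i => traj σ q b i = w).card} := by
  have := hμ.1
  choose T hT using fun m : ℕ =>
    CoinWalk.exists_time_measure_not_visits_le hμ hsc m (ε := 2⁻¹ ^ (m + 2)) (by simp)
  refine ⟨fun k => Nat.findGreatest (fun m => T m ≤ k) k,
    fun k k' hk => Nat.findGreatest_mono (fun _ hm => hm.trans hk) hk,
    Filter.tendsto_atTop_atTop.2 fun M => ⟨max M (T M), fun k hk =>
      Nat.le_findGreatest (le_of_max_le_left hk) (le_of_max_le_right hk)⟩,
    fun q => inv_two_le_measure_of_compl_subset_iUnion (hT · q) fun b hb => ?_⟩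
  by_contra! hgood
  simp only [Set.mem_iUnion, Set.mem_ofPred_eq, not_exists] at hgood
  refine hb fun k w => ?_
  dsimp only
  obtain hn | hn := eq_or_ne (Nat.findGreatest (fun m => T m ≤ k) k) 0
  · simp [hn]
  · have hTk : T (Nat.findGreatest (fun m => T m ≤ k) k) ≤ k :=
      Nat.findGreatest_of_ne_zero (P := fun m => T m ≤ k) rfl hn
    exact (not_lt.1 (hgood _ w)).trans (Finset.card_le_card
      (Finset.filter_subset_filter _ (Finset.range_subset_range.2 (by omega))))

/-- For a strongly connected Markov chain `M_σ` on a finite set `W`, there is a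
nondecreasing sequence `n_k → ∞` such that from every state, with probability at
least `1/2`, for every `k` every state has been visited at least `n_k` times among
the first `k+1` steps. -/
theorem stmt_8 {W : Type} [Fintype W] [Nonempty W] [DecidableEq W]
    (μ : Measure (ℕ → Bool)) (hμ : IsUniformBernoulli μ)
    (σ : W → W × W)
    (hsc : ∀ q q' : W,
      Relation.ReflTransGen (fun x y => y = (σ x).1 ∨ y = (σ x).2) q q') :
    ∃ nk : ℕ → ℕ, Monotone nk ∧ Filter.Tendsto nk Filter.atTop Filter.atTop ∧
      ∀ q : W, (2 : ENNReal)⁻¹ ≤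
        μ {b | ∀ k : ℕ, ∀ w : W,
          nk k ≤ ((Finset.range (k + 1)).filter fun i => traj σ q b i = w).card} :=
  stmt_8_general μ hμ σ hsc
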